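/- arXiv:2209.00593 — 5 statements merged into one kernel-verified Lean document; each statement's English description precedes it below -/
import Mathlib

section
/- Let K be a field equipped with a nonarchimedean absolute value |·|, and let x : ℤ → K be a doubly infinite family of coefficients for which there exists ε ∈ (0,1) such that for every α ∈ [ε,1) one has |x_i|·α^i → 0 both as i → +∞ and as i → −∞ (i.e., the Laurent series Σ_{i∈ℤ} x_i t^i converges on the annulus ε ≤ |t| < 1). Suppose that |x_i| ≤ 1 for all i ∈ ℤ and that |x_i| < 1 for all i < 0. Then there exists α₀ ∈ (0,1) such that for every α ∈ (α₀,1) and every i ∈ ℤ one has |x_i|·α^i ≤ 1; equivalently, the α-Gauss norm |x|_α = sup_{i∈ℤ} |x_i|·α^i is at most 1 for all α ∈ (α₀,1). -/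
open Filter Set

/-- For a nonarchimedean absolute value on a field `K` and coefficients
`x : ℤ → K` of a Laurent series converging on some annulus `ε ≤ |t| < 1`, if `|x i| ≤ 1`
for all `i` and `|x i| < 1` for all `i < 0`, then there exists `α₀ ∈ (0,1)` such that the
`α`-Gauss norm is at most 1 for all `α ∈ (α₀,1)`. -/
theorem stmt_0 (K : Type*) [Field K] (v : AbsoluteValue K ℝ)
    (hna : IsNonarchimedean v) (x : ℤ → K)
    (hconv : ∃ ε ∈ Set.Ioo (0:ℝ) 1, ∀ α ∈ Set.Ico ε (1:ℝ),
      Tendsto (fun i : ℤ => v (x i) * α ^ i) atTop (nhds 0) ∧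
      Tendsto (fun i : ℤ => v (x i) * α ^ i) atBot (nhds 0))
    (hle : ∀ i : ℤ, v (x i) ≤ 1)
    (hlt : ∀ i : ℤ, i < 0 → v (x i) < 1) :
    ∃ α₀ ∈ Set.Ioo (0:ℝ) 1, ∀ α ∈ Set.Ioo α₀ (1:ℝ), ∀ i : ℤ,
      v (x i) * α ^ i ≤ 1 := by
  obtain ⟨ε, ⟨hε0, hε1⟩, hc⟩ := hconv
  have hbot := (hc ε ⟨le_refl _, hε1⟩).2
  have hev : ∀ᶠ i in atBot, v (x i) * ε ^ i < 1 :=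
    hbot.eventually_lt_const one_pos
  obtain ⟨M0, hM0⟩ := eventually_atBot.mp hev
  set M : ℤ := min M0 (-1) with hMdef
  have hM1 : M ≤ -1 := min_le_right _ _
  have hMneg : M < 0 := lt_of_le_of_lt hM1 (by norm_num)
  have hM0' : ∀ i ≤ M, v (x i) * ε ^ i < 1 := fun i hi =>
    hM0 i (le_trans hi (min_le_left _ _))
  -- finite middle range
  have hMmem : M ∈ Finset.Icc M (-1 : ℤ) := Finset.mem_Icc.mpr ⟨le_refl M, hM1⟩
  have hne : (Finset.Icc M (-1 : ℤ)).Nonempty := ⟨M, hMmem⟩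
  set c : ℝ := (Finset.Icc M (-1 : ℤ)).sup' hne (fun i => v (x i)) with hcdef
  have hc0 : 0 ≤ c :=
    le_trans (v.nonneg (x M)) (Finset.le_sup' (fun i => v (x i)) hMmem)
  have hc1 : c < 1 := by
    rw [hcdef, Finset.sup'_lt_iff]
    intro i hi
    exact hlt i (lt_of_le_of_lt (Finset.mem_Icc.mp hi).2 (by norm_num))
  have hMR : (0:ℝ) < -(M:ℝ) := by
    have : (M:ℝ) < 0 := by exact_mod_cast hMneg
    linarith
  set α₀ : ℝ := max ε (c ^ (-(M:ℝ))⁻¹) with hα₀def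
  have hα₀1 : α₀ < 1 := max_lt hε1 (Real.rpow_lt_one hc0 hc1 (by positivity))
  refine ⟨α₀, ⟨lt_of_lt_of_le hε0 (le_max_left _ _), hα₀1⟩, ?_⟩
  rintro α ⟨hαl, hα1⟩ i
  have hεα : ε ≤ α := le_of_lt (lt_of_le_of_lt (le_max_left _ _) hαl)
  have hα0 : 0 < α := lt_of_lt_of_le hε0 hεα
  rcases le_or_gt 0 i with hi | hi
  · -- i ≥ 0 : α^i ≤ 1
    have h1 : α ^ i ≤ 1 := zpow_le_one₀ hα0 (le_of_lt hα1) hi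
    calc v (x i) * α ^ i ≤ 1 * 1 :=
          mul_le_mul (hle i) h1 (le_of_lt (zpow_pos hα0 _)) zero_le_one
      _ = 1 := one_mul 1
  · rcases le_or_gt i M with hiM | hiM
    · -- tail: α^i ≤ ε^i since i < 0 and ε ≤ α
      obtain ⟨n, hn⟩ := Int.eq_ofNat_of_zero_le (by omega : (0:ℤ) ≤ -i)
      have hpow : α ^ i ≤ ε ^ i := by
        rw [show (i : ℤ) = -(n:ℤ) by omega, zpow_neg, zpow_neg, zpow_natCast, zpow_natCast]
        exact inv_anti₀ (by positivity) (pow_le_pow_left₀ (le_of_lt hε0) hεα n)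
      calc v (x i) * α ^ i ≤ v (x i) * ε ^ i :=
            mul_le_mul_of_nonneg_left hpow (v.nonneg _)
        _ ≤ 1 := le_of_lt (hM0' i hiM)
    · -- middle: M < i < 0
      have hiIcc : i ∈ Finset.Icc M (-1 : ℤ) := Finset.mem_Icc.mpr ⟨le_of_lt hiM, by omega⟩
      have hvc : v (x i) ≤ c := Finset.le_sup' (fun i => v (x i)) hiIcc
      have hpow : α ^ i ≤ α ^ M := zpow_le_zpow_right_of_le_one₀ hα0
        (le_of_lt hα1) (le_of_lt hiM)
      have hcα : c ≤ α ^ (-M) := by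
        have h1 : c ^ (-(M:ℝ))⁻¹ ≤ α := le_of_lt (lt_of_le_of_lt (le_max_right _ _) hαl)
        have h2 : (c ^ (-(M:ℝ))⁻¹) ^ (-(M:ℝ)) ≤ α ^ (-(M:ℝ)) :=
          Real.rpow_le_rpow (Real.rpow_nonneg hc0 _) h1 (le_of_lt hMR)
        rw [← Real.rpow_mul hc0, inv_mul_cancel₀ (ne_of_gt hMR), Real.rpow_one] at h2
        rwa [show (-(M:ℝ)) = ((-M : ℤ) : ℝ) by push_cast; ring, Real.rpow_intCast] at h2
      calc v (x i) * α ^ i ≤ c * α ^ M :=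
            mul_le_mul hvc hpow (le_of_lt (zpow_pos hα0 _)) hc0
        _ ≤ α ^ (-M) * α ^ M := mul_le_mul_of_nonneg_right hcα (le_of_lt (zpow_pos hα0 _))
        _ = 1 := by rw [← zpow_add₀ (ne_of_gt hα0)]; simp
end

section
/- Let K be a field equipped with a nonarchimedean absolute value |·|, and let x : ℤ → K be a doubly infinite family of coefficients for which there exists ε ∈ (0,1) such that for every α ∈ [ε,1) one has |x_i|·α^i → 0 both as i → +∞ and as i → −∞ (i.e., the Laurent series Σ_{i∈ℤ} x_i t^i converges on the annulus ε ≤ |t| < 1). Suppose that |x_i| < 1 for all i ∈ ℤ. Then there exists α₀ ∈ (0,1) such that for every α ∈ (α₀,1) there is a constant c < 1 with |x_i|·α^i ≤ c for all i ∈ ℤ; equivalently, the α-Gauss norm |x|_α = sup_{i∈ℤ} |x_i|·α^i is strictly less than 1 for all α ∈ (α₀,1). -/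
open Filter Set

/-- For a nonarchimedean absolute value on a field `K` and coefficients
`x : ℤ → K` of a Laurent series converging on some annulus `ε ≤ |t| < 1`, if `|x i| < 1`
for all `i`, then there exists `α₀ ∈ (0,1)` such that for every `α ∈ (α₀,1)` the
`α`-Gauss norm is bounded by some constant `c < 1`. -/
theorem stmt_1 (K : Type*) [Field K] (v : AbsoluteValue K ℝ)
    (hna : IsNonarchimedean v) (x : ℤ → K)
    (hconv : ∃ ε ∈ Set.Ioo (0:ℝ) 1, ∀ α ∈ Set.Ico ε (1:ℝ),
      Tendsto (fun i : ℤ => v (x i) * α ^ i) atTop (nhds 0) ∧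
      Tendsto (fun i : ℤ => v (x i) * α ^ i) atBot (nhds 0))
    (hlt : ∀ i : ℤ, v (x i) < 1) :
    ∃ α₀ ∈ Set.Ioo (0:ℝ) 1, ∀ α ∈ Set.Ioo α₀ (1:ℝ), ∃ c : ℝ, c < 1 ∧
      ∀ i : ℤ, v (x i) * α ^ i ≤ c := by
  obtain ⟨ε, ⟨hε0, hε1⟩, hε⟩ := hconv
  obtain ⟨_, htail⟩ := hε ε ⟨le_refl ε, hε1⟩
  -- tail bound at -∞ for α = ε
  have htail' : ∀ᶠ i in atBot, v (x i) * ε ^ i < 1/2 :=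
    htail (Iio_mem_nhds (by norm_num))
  obtain ⟨N', hN'⟩ := eventually_atBot.1 htail'
  set N : ℤ := min N' 0 with hNdef
  have hN0 : N ≤ 0 := min_le_right _ _
  have hNbound : ∀ i ≤ N, v (x i) * ε ^ i < 1/2 := fun i hi =>
    hN' i (hi.trans (min_le_left _ _))
  -- finite max on Icc N 0
  have hne : (Finset.Icc N 0).Nonempty := ⟨0, Finset.mem_Icc.2 ⟨hN0, le_refl 0⟩⟩
  set m : ℝ := (Finset.Icc N 0).sup' hne (fun i => v (x i)) with hm
  have hm0 : 0 ≤ m := by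
    rw [hm]
    exact le_trans (v.nonneg (x 0)) (Finset.le_sup' (fun i => v (x i)) (Finset.mem_Icc.2 ⟨hN0, le_refl (0:ℤ)⟩))
  have hm1 : m < 1 := by
    rw [hm, Finset.sup'_lt_iff]
    intro i _
    exact hlt i
  set n : ℕ := (-N).toNat with hn
  have hnN : (n : ℤ) = -N := Int.toNat_of_nonneg (by omega)
  -- α₀
  set α₀ : ℝ := max ε (m ^ ((n+1 : ℝ)⁻¹)) with hα₀
  have hα₀0 : 0 < α₀ := lt_of_lt_of_le hε0 (le_max_left _ _)
  have hα₀1 : α₀ < 1 := by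
    apply max_lt hε1
    exact Real.rpow_lt_one hm0 hm1 (by positivity)
  refine ⟨α₀, ⟨hα₀0, hα₀1⟩, ?_⟩
  intro α ⟨hαl, hαu⟩
  have hα0 : 0 < α := hα₀0.trans hαl
  have hεα : ε ≤ α := le_trans (le_max_left _ _) hαl.le
  -- m < α ^ (n+1)
  have hmα : m < α ^ (n+1) := by
    have h1 : m ^ ((n+1 : ℝ)⁻¹) < α := lt_of_le_of_lt (le_max_right _ _) hαl
    have h2 : (m ^ ((n+1 : ℝ)⁻¹)) ^ (n+1) < α ^ (n+1) :=
      pow_lt_pow_left₀ h1 (Real.rpow_nonneg hm0 _) (by omega)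
    rwa [show ((n+1 : ℝ)) = ((n+1 : ℕ) : ℝ) by push_cast; ring,
      Real.rpow_inv_natCast_pow hm0 (by omega)] at h2
  have hzN : (0:ℝ) < α ^ N := zpow_pos hα0 N
  have hmαN : m * α ^ N < 1 := by
    have h3 : m * α ^ N < α ^ (n+1) * α ^ N := by
      exact mul_lt_mul_of_pos_right hmα hzN
    have h4 : α ^ (n+1) * α ^ N ≤ 1 := by
      rw [← zpow_natCast α (n+1), ← zpow_add₀ hα0.ne']
      calc α ^ ((n+1 : ℕ) + N : ℤ) ≤ α ^ (1 : ℤ) := by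
            apply zpow_le_zpow_right_of_le_one₀ hα0 hαu.le
            omega
        _ ≤ 1 := by simpa using hαu.le
    linarith
  refine ⟨max (max α (1/2)) (m * α ^ N), ?_, ?_⟩
  · exact max_lt (max_lt hαu (by norm_num)) hmαN
  intro i
  rcases le_or_gt i N with hi | hi
  · -- tail: α^i ≤ ε^i since i ≤ 0 and ε ≤ α
    have hαε : α ^ i ≤ ε ^ i := by
      have hj : i = -(((-i).toNat : ℤ)) := by omega
      rw [hj, zpow_neg, zpow_neg, zpow_natCast, zpow_natCast]
      exact inv_anti₀ (pow_pos hε0 _) (pow_le_pow_left₀ hε0.le hεα _)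
    have : v (x i) * α ^ i ≤ v (x i) * ε ^ i :=
      mul_le_mul_of_nonneg_left hαε (v.nonneg _)
    have := this.trans (hNbound i hi).le
    exact this.trans (le_trans (le_max_right _ _) (le_max_left _ _))
  rcases le_or_gt i 0 with hi0 | hi0
  · -- i ∈ (N, 0]
    have h1 : v (x i) ≤ m := by
      rw [hm]
      exact Finset.le_sup' (fun i => v (x i)) (Finset.mem_Icc.2 ⟨hi.le, hi0⟩)
    have h2 : α ^ i ≤ α ^ N := zpow_le_zpow_right_of_le_one₀ hα0 hαu.le hi.le
    calc v (x i) * α ^ i ≤ m * α ^ N :=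
          mul_le_mul h1 h2 (zpow_pos hα0 _).le hm0
      _ ≤ _ := le_max_right _ _
  · -- i ≥ 1
    have h1 : α ^ i ≤ α := by
      have := zpow_le_zpow_right_of_le_one₀ hα0 hαu.le (show (1:ℤ) ≤ i by omega)
      simpa using this
    have : v (x i) * α ^ i ≤ 1 * α := by
      apply mul_le_mul (hlt i).le h1 (zpow_pos hα0 _).le zero_le_one
    simpa using this.trans (le_trans (le_max_left _ _) (le_max_left _ _))
end

section
/- Let q be a real number with q > 1, and let (a_n)_{n≥0} be a sequence of real numbers with 0 < a_n ≤ 1 for all n, satisfying a_{n+1} ≥ min(a_n^{1/q}, q·a_n) for all n. Then a_n → 1 as n → ∞. -/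
open Filter

/-- If `q > 1` and `(a n)` is a sequence with `0 < a n ≤ 1` satisfying
`a (n+1) ≥ min (a n ^ (1/q)) (q * a n)`, then `a n → 1`. -/
theorem stmt_2 (q : ℝ) (hq : 1 < q) (a : ℕ → ℝ)
    (hpos : ∀ n, 0 < a n) (hle : ∀ n, a n ≤ 1)
    (hrec : ∀ n, min (a n ^ (1 / q)) (q * a n) ≤ a (n + 1)) :
    Tendsto a atTop (nhds 1) := by
  have hq0 : 0 < q := lt_trans one_pos hq
  have hlogq : 0 < Real.log q := Real.log_pos hq
  set b : ℕ → ℝ := fun n => -Real.log (a n) with hb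
  have hbnn : ∀ n, 0 ≤ b n := fun n => by
    simp only [hb, neg_nonneg]
    exact Real.log_nonpos (le_of_lt (hpos n)) (hle n)
  have key : ∀ n, b (n + 1) ≤ b n - min ((1 - 1/q) * b n) (Real.log q) := by
    intro n
    have hmin : min (Real.log (a n ^ (1/q))) (Real.log (q * a n))
        ≤ Real.log (a (n + 1)) := by
      rcases min_cases (a n ^ (1/q)) (q * a n) with ⟨h, _⟩ | ⟨h, _⟩
      · refine le_trans (min_le_left _ _) ?_
        exact Real.log_le_log (Real.rpow_pos_of_pos (hpos n) _) (h ▸ hrec n)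
      · refine le_trans (min_le_right _ _) ?_
        exact Real.log_le_log (mul_pos hq0 (hpos n)) (h ▸ hrec n)
    rw [Real.log_rpow (hpos n), Real.log_mul (ne_of_gt hq0) (ne_of_gt (hpos n))] at hmin
    have hb1 : b (n + 1) ≤ max (-(1/q * Real.log (a n))) (-(Real.log q + Real.log (a n))) := by
      simp only [hb]
      rcases min_cases (1/q * Real.log (a n)) (Real.log q + Real.log (a n)) with ⟨h, _⟩ | ⟨h, _⟩
      · exact le_trans (neg_le_neg (h ▸ hmin)) (le_max_left _ _)
      · exact le_trans (neg_le_neg (h ▸ hmin)) (le_max_right _ _)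
    have heq : max (-(1/q * Real.log (a n))) (-(Real.log q + Real.log (a n)))
        = b n - min ((1 - 1/q) * b n) (Real.log q) := by
      rcases le_total ((1 - 1/q) * b n) (Real.log q) with h | h
      · rw [min_eq_left h, max_eq_left]
        · simp only [hb]; ring
        · simp only [hb] at h ⊢; nlinarith
      · rw [min_eq_right h, max_eq_right]
        · simp only [hb]; ring
        · simp only [hb] at h ⊢; nlinarith
    exact heq ▸ hb1
  have hanti : Antitone b := antitone_nat_of_succ_le fun n => by
    have := key n
    have hmn : 0 ≤ min ((1 - 1/q) * b n) (Real.log q) := by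
      apply le_min
      · apply mul_nonneg _ (hbnn n)
        have : 1/q < 1 := by rw [div_lt_one hq0]; exact hq
        linarith
      · exact le_of_lt hlogq
    exact le_trans (key n) (sub_le_self _ hmn)
  have hbdd : BddBelow (Set.range b) := ⟨0, fun x ⟨n, hn⟩ => hn ▸ hbnn n⟩
  have hL : Tendsto b atTop (nhds (⨅ n, b n)) := tendsto_atTop_ciInf hanti hbdd
  set L := ⨅ n, b n with hLdef
  have hL0 : 0 ≤ L := le_ciInf hbnn
  have hLsucc : Tendsto (fun n => b (n + 1)) atTop (nhds L) :=
    hL.comp (tendsto_add_atTop_nat 1)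
  have hRHS : Tendsto (fun n => b n - min ((1 - 1/q) * b n) (Real.log q)) atTop
      (nhds (L - min ((1 - 1/q) * L) (Real.log q))) :=
    hL.sub ((Tendsto.const_mul _ hL).min tendsto_const_nhds)
  have hineq : L ≤ L - min ((1 - 1/q) * L) (Real.log q) :=
    le_of_tendsto_of_tendsto' hLsucc hRHS key
  have hmin0 : min ((1 - 1/q) * L) (Real.log q) ≤ 0 := by linarith
  have hLle : L ≤ 0 := by
    rcases min_le_iff.mp hmin0 with h | h
    · have h1q : 0 < 1 - 1/q := by
        have : 1/q < 1 := by rw [div_lt_one hq0]; exact hq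
        linarith
      nlinarith
    · linarith
  have hLeq : L = 0 := le_antisymm hLle hL0
  have hloga : Tendsto (fun n => Real.log (a n)) atTop (nhds 0) := by
    have : Tendsto (fun n => -b n) atTop (nhds (-L)) := hL.neg
    rw [hLeq, neg_zero] at this
    exact this.congr fun n => by simp [hb]
  have := (Real.continuous_exp.tendsto 0).comp hloga
  rw [Real.exp_zero] at this
  exact this.congr fun n => by simp [Real.exp_log (hpos n)]
end

section
/- Let X be a topological space, N a positive integer, and R > 0. Let h : X → ℝ → ℝ be a family of functions such that: (i) for each x ∈ X, h x is convex on (0, R] and h x (r) → 0 as r → 0⁺; (ii) for each x ∈ X there exist an integer b(x) and r₀(x) ∈ (0, R] such that h x (r) = (b(x)/N)·r for all r ∈ (0, r₀(x)]; and (iii) for each fixed r ∈ (0, R], the function x ↦ h x (r) is continuous on X. Then for every integer c, the set {x ∈ X : b(x) > c} is closed in X; in particular x ↦ b(x) is upper semicontinuous and, if b(x) ≥ 0 for all x, the set {x ∈ X : b(x) = 0} is open. -/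
open Filter Set

/-!
A convex function that is linear of slope `m` on an initial segment `(0, r₀]` stays above the line
`r ↦ m * r` on its whole domain, since its secant slopes can only increase. Hence `b x > c` holds
exactly when `h x r ≥ ((c + 1) / N) * r` for every `r ∈ (0, R]`: one direction is this bound, the
other is evaluation at `r₀`. For fixed `r` the condition is closed in `x`, so `{x | c < b x}` is an
intersection of closed sets.
-/

section

variable {𝕜 : Type*} [Field 𝕜] [LinearOrder 𝕜] [IsStrictOrderedRing 𝕜] {s : Set 𝕜} {f : 𝕜 → 𝕜}

theorem ConvexOn.mul_le_of_eq_mul_of_eq_mul (hf : ConvexOn 𝕜 s f) {m x y z : 𝕜} (hx : x ∈ s)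
    (hz : z ∈ s) (hxy : x < y) (hyz : y < z) (hfx : f x = m * x) (hfy : f y = m * y) :
    m * z ≤ f z := by
  have hslope := hf.slope_mono_adjacent hx hz hxy hyz
  rw [hfx, hfy, ← mul_sub, mul_div_cancel_right₀ _ (sub_pos.2 hxy).ne', le_div_iff₀ (sub_pos.2 hyz)]
    at hslope
  linarith

theorem ConvexOn.mul_le_of_eq_mul_on_Ioc {R r₀ m : 𝕜} (hf : ConvexOn 𝕜 (Ioc 0 R) f) (hr₀ : 0 < r₀)
    (hlin : ∀ r ∈ Ioc 0 r₀, f r = m * r) {r : 𝕜} (hr : r ∈ Ioc 0 R) : m * r ≤ f r := by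
  rcases le_or_gt r r₀ with hrr₀ | hr₀r
  · exact (hlin r ⟨hr.1, hrr₀⟩).ge
  · have hhalf : r₀ / 2 < r₀ := half_lt_self hr₀
    exact hf.mul_le_of_eq_mul_of_eq_mul ⟨half_pos hr₀, by linarith [hr.2]⟩ hr hhalf hr₀r
      (hlin _ ⟨half_pos hr₀, hhalf.le⟩) (hlin _ ⟨hr₀, le_rfl⟩)

end

theorem ConvexOn.int_lt_iff_forall_div_mul_le {R r₀ : ℝ} {N : ℕ} {f : ℝ → ℝ} {b : ℤ}
    (hf : ConvexOn ℝ (Ioc 0 R) f) (hN : 0 < N) (hr₀ : r₀ ∈ Ioc 0 R)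
    (hlin : ∀ r ∈ Ioc 0 r₀, f r = ((b : ℝ) / N) * r) (c : ℤ) :
    c < b ↔ ∀ r ∈ Ioc 0 R, ((c : ℝ) + 1) / N * r ≤ f r := by
  have hN' : (0 : ℝ) < N := Nat.cast_pos.2 hN
  have hslope : c < b ↔ ((c : ℝ) + 1) / N ≤ (b : ℝ) / N := by
    rw [div_le_div_iff_of_pos_right hN', ← Int.add_one_le_iff]
    exact_mod_cast Iff.rfl
  rw [hslope]
  constructor
  · intro hcb r hr
    exact (mul_le_mul_of_nonneg_right hcb hr.1.le).trans (hf.mul_le_of_eq_mul_on_Ioc hr₀.1 hlin hr)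
  · intro hall
    have hr₀' := hall r₀ hr₀
    rw [hlin r₀ ⟨hr₀.1, le_rfl⟩] at hr₀'
    exact (mul_le_mul_iff_of_pos_right hr₀.1).1 hr₀'

theorem stmt_8_general (X : Type*) [TopologicalSpace X] (N : ℕ) (hN : 0 < N)
    (R : ℝ) (h : X → ℝ → ℝ) (b : X → ℤ)
    (hconv : ∀ x, ConvexOn ℝ (Set.Ioc 0 R) (h x))
    (haff : ∀ x, ∃ r₀ ∈ Set.Ioc 0 R, ∀ r ∈ Set.Ioc 0 r₀,
      h x r = ((b x : ℝ) / N) * r)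
    (hcont : ∀ r ∈ Set.Ioc 0 R, Continuous fun x => h x r) :
    (∀ c : ℤ, IsClosed {x | c < b x}) ∧
    UpperSemicontinuous b ∧
    ((∀ x, 0 ≤ b x) → IsOpen {x | b x = 0}) := by
  have hclosed (c : ℤ) : IsClosed {x | c < b x} := by
    have hset : {x | c < b x} = ⋂ r ∈ Ioc 0 R, {x | ((c : ℝ) + 1) / N * r ≤ h x r} := by
      ext x
      obtain ⟨r₀, hr₀, hlin⟩ := haff x
      simpa only [mem_ofPred_eq, mem_iInter] using
        (hconv x).int_lt_iff_forall_div_mul_le hN hr₀ hlin c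
    rw [hset]
    exact isClosed_biInter fun r hr => isClosed_le continuous_const (hcont r hr)
  have husc : UpperSemicontinuous b :=
    upperSemicontinuous_iff_isClosed_preimage.2 fun y =>
      (by simpa only [Int.sub_one_lt_iff] using hclosed (y - 1) : IsClosed {x | y ≤ b x})
  refine ⟨hclosed, husc, fun hb => ?_⟩
  have hzero : {x | b x = 0} = b ⁻¹' Iio 1 := by
    ext x
    have := hb x
    simp only [mem_ofPred_eq, mem_preimage, mem_Iio]
    omega
  exact hzero ▸ husc.isOpen_preimage 1

/-- Semicontinuity of initial slopes: for a family `h x` of convex functions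
on `(0,R]` tending to `0` at `0⁺`, affine of slope `b x / N` near `0`, and continuous in
`x` for each fixed `r`, the sets `{x | b x > c}` are closed; hence `b` is upper
semicontinuous and (when `b ≥ 0`) the vanishing locus of `b` is open. -/
theorem stmt_8 (X : Type*) [TopologicalSpace X] (N : ℕ) (hN : 0 < N)
    (R : ℝ) (hR : 0 < R) (h : X → ℝ → ℝ) (b : X → ℤ)
    (hconv : ∀ x, ConvexOn ℝ (Set.Ioc 0 R) (h x))
    (hlim : ∀ x, Tendsto (h x) (nhdsWithin 0 (Set.Ioi 0)) (nhds 0))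
    (haff : ∀ x, ∃ r₀ ∈ Set.Ioc 0 R, ∀ r ∈ Set.Ioc 0 r₀,
      h x r = ((b x : ℝ) / N) * r)
    (hcont : ∀ r ∈ Set.Ioc 0 R, Continuous fun x => h x r) :
    (∀ c : ℤ, IsClosed {x | c < b x}) ∧
    UpperSemicontinuous b ∧
    ((∀ x, 0 ≤ b x) → IsOpen {x | b x = 0}) :=
  stmt_8_general X N hN R h b hconv haff hcont
end

section
/- Let N be a positive integer, R > 0, and let g : ℝ → ℝ be convex on (0, R] with g(r) → 0 as r → 0⁺. Suppose that at every r ∈ (0, R) the function g has a right derivative belonging to {k/N : k ∈ ℕ} (i.e., there exists a natural number k such that g has derivative k/N within (r, ∞) at r). If there exist R' ∈ (0, R] and d > 0 with g(R') < d, then g(r) = 0 for every r ∈ (0, R' − N·d] (whenever R' − N·d > 0). -/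
open Filter Set Topology

/-! Since all right derivatives are `≥ 0` and `g(0⁺) = 0`, `g` is nonnegative. At `r` the right
derivative `k/N` dominates the slope `g r / r` from the origin, so `k = 0` forces `g r ≤ 0`; and
if `k ≥ 1` the slope is at least `1/N`, so by convexity `g R' ≥ g r + (R' - r)/N ≥ g r + d`,
which contradicts `g R' < d` unless `g r < 0`. -/

namespace ConvexOn

variable {R : ℝ} {g : ℝ → ℝ}

lemma tendsto_slope_nhdsGT_zero (hlim : Tendsto g (𝓝[>] 0) (𝓝 0)) {a : ℝ} (ha : a ≠ 0) :
    Tendsto (fun s ↦ slope g s a) (𝓝[>] 0) (𝓝 (g a / a)) := by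
  have hnum : Tendsto (fun s ↦ g a - g s) (𝓝[>] 0) (𝓝 (g a)) := by
    simpa using tendsto_const_nhds.sub hlim
  have hden : Tendsto (fun s ↦ a - s) (𝓝[>] 0) (𝓝 a) :=
    ((continuous_sub_left a).tendsto' 0 a (sub_zero a)).mono_left nhdsWithin_le_nhds
  simp_rw [slope_def_field]
  exact hnum.div hden ha

lemma div_le_slope (hconv : ConvexOn ℝ (Ioc 0 R) g) (hlim : Tendsto g (𝓝[>] 0) (𝓝 0))
    {a b : ℝ} (ha : 0 < a) (hab : a < b) (hb : b ≤ R) :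
    g a / a ≤ slope g a b := by
  refine le_of_tendsto (tendsto_slope_nhdsGT_zero hlim ha.ne') ?_
  filter_upwards [Ioo_mem_nhdsGT ha] with s hs
  rw [slope_comm]
  exact hconv.slope_mono ⟨ha, hab.le.trans hb⟩ ⟨⟨hs.1, hs.2.le.trans (hab.le.trans hb)⟩, hs.2.ne⟩
    ⟨⟨ha.trans hab, hb⟩, hab.ne'⟩ (hs.2.trans hab).le

lemma div_le_of_hasDerivWithinAt_Ioi (hconv : ConvexOn ℝ (Ioc 0 R) g)
    (hlim : Tendsto g (𝓝[>] 0) (𝓝 0)) {a m : ℝ} (ha : a ∈ Ioo 0 R)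
    (hm : HasDerivWithinAt g m (Ioi a) a) : g a / a ≤ m := by
  refine ge_of_tendsto ((hasDerivWithinAt_iff_tendsto_slope' self_notMem_Ioi).mp hm) ?_
  filter_upwards [Ioo_mem_nhdsGT ha.2] with t ht
  exact div_le_slope hconv hlim ha.1 ht.1 ht.2.le

lemma nonneg_of_hasDerivWithinAt_Ioi_nonneg (hconv : ConvexOn ℝ (Ioc 0 R) g)
    (hlim : Tendsto g (𝓝[>] 0) (𝓝 0))
    (hderiv : ∀ r ∈ Ioo 0 R, ∃ m, 0 ≤ m ∧ HasDerivWithinAt g m (Ioi r) r)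
    {x : ℝ} (hx : x ∈ Ioo 0 R) : 0 ≤ g x := by
  refine le_of_tendsto hlim ?_
  filter_upwards [Ioo_mem_nhdsGT hx.1] with s hs
  obtain ⟨m, hm0, hm⟩ := hderiv s ⟨hs.1, hs.2.trans hx.2⟩
  have hslope := hconv.le_slope_of_hasDerivWithinAt_Ioi ⟨hs.1, (hs.2.trans hx.2).le⟩
    ⟨hx.1, hx.2.le⟩ hs.2 hm
  rw [slope_def_field, le_div_iff₀ (sub_pos.2 hs.2)] at hslope
  linarith [mul_nonneg hm0 (sub_pos.2 hs.2).le]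

end ConvexOn

theorem stmt_9_general (N : ℕ) (hN : 0 < N) (R : ℝ) (g : ℝ → ℝ)
    (hconv : ConvexOn ℝ (Set.Ioc 0 R) g)
    (hlim : Tendsto g (nhdsWithin 0 (Set.Ioi 0)) (nhds 0))
    (hslope : ∀ r ∈ Set.Ioo 0 R, ∃ k : ℕ,
      HasDerivWithinAt g ((k : ℝ) / N) (Set.Ioi r) r)
    (R' : ℝ) (hR' : R' ∈ Set.Ioc 0 R) (d : ℝ) (hd : 0 < d) (hgR' : g R' < d) :
    ∀ r ∈ Set.Ioc 0 (R' - N * d), g r = 0 := by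
  rintro r ⟨hr0, hrd⟩
  have hN' : (0 : ℝ) < N := Nat.cast_pos.2 hN
  have hrR' : r < R' := by nlinarith
  have hr : r ∈ Ioo 0 R := ⟨hr0, hrR'.trans_le hR'.2⟩
  have hg_nonneg : 0 ≤ g r := hconv.nonneg_of_hasDerivWithinAt_Ioi_nonneg hlim
    (fun s hs ↦ (hslope s hs).elim fun k hk ↦ ⟨_, by positivity, hk⟩) hr
  obtain ⟨k, hk⟩ := hslope r hr
  refine le_antisymm ?_ hg_nonneg
  rcases Nat.eq_zero_or_pos k with rfl | hk1
  · have h := hconv.div_le_of_hasDerivWithinAt_Ioi hlim hr hk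
    simpa [div_le_iff₀ hr0] using h
  · have hclimb : d ≤ (k / N) * (R' - r) := calc
      d ≤ (R' - r) / N := by rw [le_div_iff₀ hN']; linarith
      _ = 1 / N * (R' - r) := by ring
      _ ≤ (k / N) * (R' - r) := by gcongr; exact_mod_cast hk1
    have hchord := hconv.le_slope_of_hasDerivWithinAt_Ioi ⟨hr0, hr.2.le⟩ hR' hrR' hk
    rw [slope_def_field, le_div_iff₀ (sub_pos.2 hrR')] at hchord
    linarith

/-- A convex function `g` on `(0,R]` tending to `0` at `0⁺` whose right
derivatives all lie in `{k/N : k ∈ ℕ}` and which satisfies `g R' < d` must vanish on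
`(0, R' - N·d]`. -/
theorem stmt_9 (N : ℕ) (hN : 0 < N) (R : ℝ) (hR : 0 < R) (g : ℝ → ℝ)
    (hconv : ConvexOn ℝ (Set.Ioc 0 R) g)
    (hlim : Tendsto g (nhdsWithin 0 (Set.Ioi 0)) (nhds 0))
    (hslope : ∀ r ∈ Set.Ioo 0 R, ∃ k : ℕ,
      HasDerivWithinAt g ((k : ℝ) / N) (Set.Ioi r) r)
    (R' : ℝ) (hR' : R' ∈ Set.Ioc 0 R) (d : ℝ) (hd : 0 < d) (hgR' : g R' < d) :
    ∀ r ∈ Set.Ioc 0 (R' - N * d), g r = 0 :=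
  stmt_9_general N hN R g hconv hlim hslope R' hR' d hd hgR'
end
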